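/- arXiv:1304.3319 — 2 statements merged into one kernel-verified Lean document; each statement's English description precedes it below -/
import Mathlib

section
/- With L(k) = ∑_{j=1}^{k-1} (-1)^{j-1} a_j for the partial quotients of x(b), for n = 2^j with n ≥ 8 and 2 ≤ k ≤ n/2 - 1, one has L(n+k) = L(k) - 4. -/
/-- Partial quotients of x(b) via the folding recursion (fuel-based; fuel `k` suffices
since every recursive call has a strictly smaller index). -/
def cfAAux (b : ℤ) : ℕ → ℕ → ℤ
  | 0, _ => 0
  | fuel + 1, k =>
    if k = 0 then 0
    else if k = 1 then b - 1
    else if k = 2 then b + 2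
    else
      let n := 2 ^ Nat.log2 (k - 1)
      if k = n + 1 then cfAAux b fuel n - 2
      else if k = 2 * n then cfAAux b fuel 1 + 1
      else cfAAux b fuel (2 * n + 1 - k)

/-- `cfA b k` = the k-th partial quotient `a_k` of x(b). -/
def cfA (b : ℤ) (k : ℕ) : ℤ := cfAAux b k k

/-- `L(k) = ∑_{j=1}^{k-1} (-1)^{j-1} a_j`. -/
def Lfun (b : ℤ) (k : ℕ) : ℤ := ∑ j ∈ Finset.Ioo 0 k, (-1) ^ (j - 1) * cfA b j

/-!
`L(n + k) - L(k)` is the alternating sum of `a_m` over `k ≤ m < n + k`. Split it into the windows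
`[k, n + 1 - k]` and `[n + 2 - k, n + k - 1]`, centred at `N + 1/2` for `N = n/2` and `N = n`.
In a window centred at `N + 1/2`, `N = 2^i`, the folding gives `a_{N+1+s} = a_{N-s}` for
`1 ≤ s ≤ N - 2`, and the two terms carry opposite signs, so only the middle pair survives:
`-a_N + a_{N+1} = -2`. Hence each window contributes `-2`.
-/

open Finset

lemma cfAAux_eq_of_le (b : ℤ) {k f₁ f₂ : ℕ} (h₁ : k ≤ f₁) (h₂ : k ≤ f₂) :
    cfAAux b f₁ k = cfAAux b f₂ k := by
  induction k using Nat.strong_induction_on generalizing f₁ f₂ with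
  | _ k ih =>
  rcases f₁ with _ | f₁ <;> rcases f₂ with _ | f₂
  · rfl
  · obtain rfl : k = 0 := by omega
    simp [cfAAux]
  · obtain rfl : k = 0 := by omega
    simp [cfAAux]
  · have hlog : 2 ^ Nat.log2 (k - 1) ≤ k - 1 ∨ k - 1 = 0 :=
      (k - 1).eq_zero_or_pos.elim Or.inr fun h => Or.inl (Nat.log2_self_le h.ne')
    simp only [cfAAux]
    split_ifs <;> first | rfl | (congr 1; apply ih <;> omega) | (apply ih <;> omega)

lemma cfAAux_eq_cfA (b : ℤ) {f k : ℕ} (h : k ≤ f) : cfAAux b f k = cfA b k :=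
  cfAAux_eq_of_le b h le_rfl

lemma cfA_eq_of_two_pow_lt (b : ℤ) {i m : ℕ} (hm : 3 ≤ m) (h₁ : 2 ^ i < m)
    (h₂ : m ≤ 2 * 2 ^ i) :
    cfA b m = if m = 2 ^ i + 1 then cfA b (2 ^ i) - 2
      else if m = 2 * 2 ^ i then cfA b 1 + 1
      else cfA b (2 * 2 ^ i + 1 - m) := by
  obtain ⟨f, rfl⟩ : ∃ f, m = f + 1 := ⟨m - 1, by omega⟩
  have hlog : Nat.log2 f = i := by
    rw [Nat.log2_eq_log_two]
    exact Nat.log_eq_of_pow_le_of_lt_pow (by omega) (by rw [pow_succ]; omega)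
  rw [cfA]
  simp only [cfAAux, Nat.add_sub_cancel, hlog]
  split_ifs <;> first | contradiction | omega | rw [cfAAux_eq_cfA b (by omega)]

lemma cfA_two_pow_add_one (b : ℤ) {i : ℕ} (hi : 1 ≤ i) :
    cfA b (2 ^ i + 1) = cfA b (2 ^ i) - 2 := by
  have : 2 ≤ 2 ^ i := Nat.le_self_pow (by omega) 2
  rw [cfA_eq_of_two_pow_lt b (i := i) (by omega) (by omega) (by omega), if_pos rfl]

lemma cfA_two_pow_add_one_add (b : ℤ) {i s : ℕ} (hs : 1 ≤ s) (hs' : s + 2 ≤ 2 ^ i) :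
    cfA b (2 ^ i + 1 + s) = cfA b (2 ^ i - s) := by
  rw [cfA_eq_of_two_pow_lt b (i := i) (by omega) (by omega) (by omega), if_neg (by omega),
    if_neg (by omega)]
  congr 1
  omega

def altTerm (b : ℤ) (m : ℕ) : ℤ := (-1) ^ (m - 1) * cfA b m

lemma Lfun_eq_sum_Ico (b : ℤ) (k : ℕ) : Lfun b k = ∑ m ∈ Ico 1 k, altTerm b m := by
  rw [Lfun, ← Ico_add_one_left_eq_Ioo]
  rfl

lemma altTerm_two_pow_add_altTerm_two_pow_add_one (b : ℤ) {i : ℕ} (hi : 1 ≤ i) :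
    altTerm b (2 ^ i) + altTerm b (2 ^ i + 1) = -2 := by
  obtain ⟨i, rfl⟩ : ∃ i', i = i' + 1 := ⟨i - 1, by omega⟩
  have hpos : 1 ≤ 2 ^ i := Nat.one_le_two_pow
  have hodd : Odd (2 ^ (i + 1) - 1) := ⟨2 ^ i - 1, by rw [pow_succ]; omega⟩
  have heven : Even (2 ^ (i + 1)) := ⟨2 ^ i, by rw [pow_succ]; omega⟩
  rw [altTerm, altTerm, cfA_two_pow_add_one b (by omega), Nat.add_sub_cancel,
    hodd.neg_one_pow, heven.neg_one_pow]
  ring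

lemma altTerm_two_pow_sub_add_altTerm_two_pow_add_one_add (b : ℤ) {i s : ℕ} (hs : 1 ≤ s)
    (hs' : s + 2 ≤ 2 ^ i) :
    altTerm b (2 ^ i - s) + altTerm b (2 ^ i + 1 + s) = 0 := by
  obtain ⟨t, ht⟩ : ∃ t, 2 ^ i = t + s + 1 := ⟨2 ^ i - s - 1, by omega⟩
  rw [altTerm, altTerm, cfA_two_pow_add_one_add b hs hs', ht,
    show t + s + 1 - s - 1 = t by omega, show t + s + 1 + 1 + s - 1 = t + 2 * s + 1 by omega,
    pow_succ, pow_add, pow_mul]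
  ring

lemma sum_Ico_altTerm_two_pow (b : ℤ) {i r : ℕ} (hi : 1 ≤ i) (hr : 1 ≤ r)
    (hr' : r < 2 ^ i) :
    ∑ m ∈ Ico (2 ^ i + 1 - r) (2 ^ i + 1 + r), altTerm b m = -2 := by
  induction r, hr using Nat.le_induction with
  | base =>
    rw [sum_Ico_succ_top (by omega), sum_Ico_succ_top (by omega), Nat.add_sub_cancel,
      Ico_self, sum_empty, zero_add, altTerm_two_pow_add_altTerm_two_pow_add_one b hi]
  | succ r hr ih =>
    rw [← add_assoc, sum_Ico_succ_top (by omega),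
      sum_eq_sum_Ico_succ_bot (by omega), show 2 ^ i + 1 - (r + 1) + 1 = 2 ^ i + 1 - r by omega,
      ih (by omega), show 2 ^ i + 1 - (r + 1) = 2 ^ i - r by omega]
    linarith [altTerm_two_pow_sub_add_altTerm_two_pow_add_one_add b hr (i := i) (by omega)]

theorem L_shift_general (b : ℤ) (j n : ℕ) (hn : n = 2 ^ j) (h8 : 8 ≤ n)
    (k : ℕ) (hk : 2 ≤ k) (hk' : k ≤ n / 2 - 1) :
    Lfun b (n + k) = Lfun b k - 4 := by
  have hj : 2 ≤ j := by
    by_contra! h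
    interval_cases j <;> omega
  have hn' : n = 2 * 2 ^ (j - 1) := by rw [hn, ← pow_succ', Nat.sub_add_cancel (by omega)]
  have hlow : ∑ m ∈ Ico k (n + 2 - k), altTerm b m = -2 := by
    convert sum_Ico_altTerm_two_pow b (i := j - 1) (r := 2 ^ (j - 1) + 1 - k)
      (by omega) (by omega) (by omega) using 2
    congr 1 <;> omega
  have hhigh : ∑ m ∈ Ico (n + 2 - k) (n + k), altTerm b m = -2 := by
    convert sum_Ico_altTerm_two_pow b (i := j) (r := k - 1) (by omega) (by omega) (by omega)
      using 2
    congr 1 <;> omega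
  rw [Lfun_eq_sum_Ico, Lfun_eq_sum_Ico, ← sum_Ico_consecutive _ (by omega : 1 ≤ k)
    (by omega : k ≤ n + k), ← sum_Ico_consecutive _ (by omega : k ≤ n + 2 - k)
    (by omega : n + 2 - k ≤ n + k), hlow, hhigh]
  ring

theorem L_shift (b : ℤ) (hb : 3 ≤ b) (j n : ℕ) (hn : n = 2 ^ j) (h8 : 8 ≤ n)
    (k : ℕ) (hk : 2 ≤ k) (hk' : k ≤ n / 2 - 1) :
    Lfun b (n + k) = Lfun b k - 4 :=
  L_shift_general b j n hn h8 k hk hk'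
end

section
/- For n = 2^j with n ≥ 8, 2 ≤ k ≤ n/2 - 1, and t_m the denominators of the convergents of x(b), the ratio t_{n+k}/t_{n+k-1} equals the finite continued fraction [a_k; a_{k-1}, ..., a_2, b-2, b, a_2, a_3, ..., a_{n/2-1}, c] for some rational c with 1 ≤ c ≤ b+3. -/
/-- Denominators t_m of the convergents of x(b). -/
def tDen (b : ℤ) : ℕ → ℤ
  | 0 => 1
  | 1 => cfA b 1
  | m + 2 => cfA b (m + 2) * tDen b (m + 1) + tDen b m

/-- Value of the finite continued fraction [c₀; c₁, …, cₘ] with real entries. -/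
noncomputable def cfVal : List ℝ → ℝ
  | [] => 0
  | [x] => x
  | x :: y :: xs => x + 1 / cfVal (y :: xs)

lemma log2_bounds (k : ℕ) (hk : 1 ≤ k) :
    2 ^ Nat.log2 k ≤ k ∧ k < 2 * 2 ^ Nat.log2 k := by
  rw [Nat.log2_eq_log_two]
  constructor
  · exact Nat.pow_log_le_self 2 (by omega)
  · have := Nat.lt_pow_succ_log_self (b := 2) (by norm_num) k
    rw [pow_succ] at this
    omega

lemma cfAAux_fuel (b : ℤ) : ∀ k f1 f2, k ≤ f1 → k ≤ f2 → cfAAux b f1 k = cfAAux b f2 k := by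
  intro k
  induction k using Nat.strong_induction_on with
  | _ k ih =>
    intro f1 f2 h1 h2
    match k, f1, f2 with
    | 0, f1, f2 => cases f1 <;> cases f2 <;> simp [cfAAux]
    | k+1, f1+1, f2+1 =>
      rw [cfAAux, cfAAux]
      split
      · rfl
      · split
        · rfl
        · split
          · rfl
          · rename_i hk0 hk1 hk2
            obtain ⟨hl1, hl2⟩ := log2_bounds k (by omega)
            set n := 2 ^ Nat.log2 k with hn
            simp only [Nat.add_sub_cancel]
            split_ifs with hkn hk2n
            · rw [ih n (by omega) f1 f2 (by omega) (by omega)]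
            · rw [ih 1 (by omega) f1 f2 (by omega) (by omega)]
            · rw [ih (2*n+1-(k+1)) (by omega) f1 f2 (by omega) (by omega)]

lemma cfA_one (b : ℤ) : cfA b 1 = b - 1 := by simp [cfA, cfAAux]
lemma cfA_two (b : ℤ) : cfA b 2 = b + 2 := by simp [cfA, cfAAux]

lemma cfA_rec (b : ℤ) (k : ℕ) (hk : 3 ≤ k) :
    cfA b k = (if k = 2 ^ Nat.log2 (k-1) + 1 then cfA b (2 ^ Nat.log2 (k-1)) - 2
      else if k = 2 * 2 ^ Nat.log2 (k-1) then cfA b 1 + 1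
      else cfA b (2 * 2 ^ Nat.log2 (k-1) + 1 - k)) := by
  obtain ⟨f, rfl⟩ : ∃ f, k = f + 1 := ⟨k - 1, by omega⟩
  obtain ⟨hl1, hl2⟩ := log2_bounds f (by omega)
  set n := 2 ^ Nat.log2 f with hn
  rw [cfA, cfAAux]
  simp only [Nat.add_sub_cancel, ← hn]
  rw [if_neg (by omega), if_neg (by omega), if_neg (by omega)]
  split_ifs with h1 h2
  · rw [cfAAux_fuel b n f (n) (by omega) le_rfl]; rfl
  · rw [cfAAux_fuel b 1 f 1 (by omega) le_rfl]; rfl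
  · rw [cfAAux_fuel b (2*n+1-(f+1)) f _ (by omega) le_rfl]; rfl

lemma two_le_pow {j : ℕ} (h : 1 ≤ j) : 2 ≤ 2 ^ j := by
  have := Nat.pow_le_pow_right (show 1 ≤ 2 by norm_num) h
  simpa using this

lemma four_le_pow {j : ℕ} (h : 2 ≤ j) : 4 ≤ 2 ^ j := by
  have := Nat.pow_le_pow_right (show 1 ≤ 2 by norm_num) h
  norm_num at this; omega

lemma log2_pow_pred (i : ℕ) (hi : 1 ≤ i) : Nat.log2 (2 ^ i - 1) = i - 1 := by
  obtain ⟨i', rfl⟩ : ∃ i', i = i' + 1 := ⟨i - 1, by omega⟩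
  rw [Nat.log2_eq_log_two]
  simp only [Nat.add_sub_cancel]
  have h1 : (1:ℕ) ≤ 2 ^ i' := Nat.one_le_two_pow
  have h2 : (2:ℕ) ^ (i' + 1) = 2 * 2 ^ i' := by rw [pow_succ]; ring
  apply Nat.log_eq_of_pow_le_of_lt_pow <;> rw [h2] <;> omega

lemma log2_in_range (j m : ℕ) (h1 : 1 ≤ m) (h2 : m ≤ 2 ^ j) : Nat.log2 (2 ^ j + m - 1) = j := by
  rw [Nat.log2_eq_log_two]
  apply Nat.log_eq_of_pow_le_of_lt_pow
  · omega
  · rw [pow_succ]; omega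

lemma cfA_pow (b : ℤ) (i : ℕ) (hi : 2 ≤ i) : cfA b (2 ^ i) = b := by
  have h4 : 4 ≤ 2 ^ i := four_le_pow hi
  rw [cfA_rec b (2^i) (by omega)]
  have hl : Nat.log2 (2^i - 1) = i - 1 := log2_pow_pred i (by omega)
  have h2 : 2 * 2 ^ (i-1) = 2 ^ i := by
    rw [mul_comm, ← pow_succ]; congr 1; omega
  have h3 : 2 ≤ 2 ^ (i-1) := two_le_pow (by omega)
  rw [hl, if_neg (by omega), if_pos (by omega), cfA_one]
  ring

lemma cfA_pow_succ (b : ℤ) (i : ℕ) (hi : 2 ≤ i) : cfA b (2 ^ i + 1) = b - 2 := by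
  have h4 : 4 ≤ 2 ^ i := four_le_pow hi
  rw [cfA_rec b (2^i + 1) (by omega)]
  have hl : Nat.log2 (2^i + 1 - 1) = i := by
    have := log2_in_range i 1 le_rfl (by omega); simpa using this
  rw [hl, if_pos rfl, cfA_pow b i hi]

lemma cfA_refl (b : ℤ) (j m : ℕ) (h1 : 2 ≤ m) (h2 : m ≤ 2 ^ j - 1) :
    cfA b (2 ^ j + m) = cfA b (2 ^ j + 1 - m) := by
  have hj : 1 ≤ j := by
    rcases Nat.eq_zero_or_pos j with h | h
    · subst h; simp at h2; omega
    · exact h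
  have h2j : 2 ≤ 2 ^ j := two_le_pow hj
  rw [cfA_rec b (2^j + m) (by omega)]
  rw [log2_in_range j m (by omega) (by omega)]
  rw [if_neg (by omega), if_neg (by omega)]
  congr 1
  omega

lemma cfA_pos (b : ℤ) (hb : 3 ≤ b) : ∀ k, 1 ≤ k → 1 ≤ cfA b k := by
  intro k
  induction k using Nat.strong_induction_on with
  | _ k ih =>
    intro hk1
    rcases Nat.lt_or_ge k 3 with h | h
    · interval_cases k
      · rw [cfA_one]; omega
      · rw [cfA_two]; omega
    · rw [cfA_rec b k h]
      obtain ⟨hl1, hl2⟩ := log2_bounds (k-1) (by omega)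
      split_ifs with h1 h2
      · rcases Nat.lt_or_ge (Nat.log2 (k-1)) 2 with hi | hi
        · have : Nat.log2 (k-1) = 0 ∨ Nat.log2 (k-1) = 1 := by omega
          rcases this with h0 | h0
          · rw [h0] at hl1 hl2 h1; norm_num at hl1 hl2 h1; omega
          · rw [h0]; rw [show (2:ℕ)^1 = 2 from rfl, cfA_two]; omega
        · rw [cfA_pow b _ hi]; omega
      · rw [cfA_one]; omega
      · exact ih (2 * 2 ^ Nat.log2 (k-1) + 1 - k) (by omega) (by omega)

lemma tDen_pos_mono (b : ℤ) (hb : 3 ≤ b) :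
    ∀ m, 1 ≤ tDen b m ∧ tDen b m ≤ tDen b (m+1) := by
  intro m
  induction m using Nat.strong_induction_on with
  | _ m ih =>
    match m with
    | 0 =>
      constructor
      · simp [tDen]
      · show tDen b 0 ≤ tDen b 1
        simp [tDen, cfA_one]; omega
    | 1 =>
      have a2 := cfA_two b
      constructor
      · show 1 ≤ tDen b 1
        simp [tDen, cfA_one]; omega
      · show tDen b 1 ≤ tDen b 2
        have h1 : (1:ℤ) ≤ tDen b 1 := by simp [tDen, cfA_one]; omega
        show tDen b 1 ≤ cfA b 2 * tDen b 1 + tDen b 0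
        have h0 : tDen b 0 = 1 := rfl
        nlinarith
    | m+2 =>
      obtain ⟨i1, i2⟩ := ih m (by omega)
      obtain ⟨i3, i4⟩ := ih (m+1) (by omega)
      have ha := cfA_pos b hb (m+2) (by omega)
      have ha' := cfA_pos b hb (m+3) (by omega)
      constructor
      · show 1 ≤ cfA b (m+2) * tDen b (m+1) + tDen b m
        nlinarith
      · show cfA b (m+2) * tDen b (m+1) + tDen b m ≤ cfA b (m+3) * tDen b (m+2) + tDen b (m+1)
        have h22 : tDen b (m+2) = cfA b (m+2) * tDen b (m+1) + tDen b m := rfl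
        nlinarith

lemma tDen_pos (b : ℤ) (hb : 3 ≤ b) (m : ℕ) : 1 ≤ tDen b m := (tDen_pos_mono b hb m).1

lemma cfA_plus (b : ℤ) (j m : ℕ) (hj : 3 ≤ j) (h1 : 2 ≤ m) (h2 : m ≤ 2 ^ (j-1) - 1) :
    cfA b (2 ^ j + m) = cfA b m := by
  have h4 : 4 ≤ 2 ^ (j-1) := four_le_pow (by omega)
  have e2 : (2:ℕ) ^ j = 2 * 2 ^ (j-1) := by
    rw [← pow_succ']; congr 1; omega
  rw [cfA_refl b j m h1 (by omega)]
  have e3 : 2 ^ j + 1 - m = 2 ^ (j-1) + (2 ^ (j-1) + 1 - m) := by omega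
  rw [e3, cfA_refl b (j-1) (2 ^ (j-1) + 1 - m) (by omega) (by omega)]
  congr 1
  omega

lemma cfA_minus (b : ℤ) (j m : ℕ) (hj : 3 ≤ j) (h1 : 1 ≤ m) (h2 : m ≤ 2 ^ (j-1) - 2) :
    cfA b (2 ^ j - m) = cfA b (m+1) := by
  have h4 : 4 ≤ 2 ^ (j-1) := four_le_pow (by omega)
  have e2 : (2:ℕ) ^ j = 2 * 2 ^ (j-1) := by
    rw [← pow_succ']; congr 1; omega
  have e3 : 2 ^ j - m = 2 ^ (j-1) + (2 ^ (j-1) - m) := by omega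
  rw [e3, cfA_refl b (j-1) (2 ^ (j-1) - m) (by omega) (by omega)]
  congr 1
  omega

lemma cfVal_cons (x : ℝ) (L : List ℝ) (h : L ≠ []) : cfVal (x :: L) = x + 1 / cfVal L := by
  match L with
  | y :: ys => rw [cfVal]

lemma cf_chain (b : ℤ) (hb : 3 ≤ b) (l : ℕ) (hl : 1 ≤ l) (d : ℕ) :
    (tDen b (l + d) : ℝ) / (tDen b (l + d - 1) : ℝ) =
      cfVal (((List.range d).map fun i => ((cfA b (l + d - i) : ℤ) : ℝ)) ++
        [(tDen b l : ℝ) / (tDen b (l - 1) : ℝ)]) := by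
  have hpos : ∀ m : ℕ, (0:ℝ) < (tDen b m : ℝ) := by
    intro m
    have := tDen_pos b hb m
    exact_mod_cast (by omega : (0:ℤ) < tDen b m)
  induction d with
  | zero => simp [cfVal]
  | succ d ihd =>
    rw [List.range_succ_eq_map]
    simp only [List.map_cons, List.map_map, Nat.sub_zero]
    rw [List.cons_append, cfVal_cons _ _ (by simp)]
    have e2 : ((fun i => ((cfA b (l + (d+1) - i) : ℤ) : ℝ)) ∘ Nat.succ)
        = fun i => ((cfA b (l + d - i) : ℤ) : ℝ) := by
      funext i
      simp only [Function.comp]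
      congr 2
      omega
    rw [e2, ← ihd]
    have ht : tDen b (l + (d+1)) = cfA b (l + (d+1)) * tDen b (l + d) + tDen b (l + d - 1) := by
      have e : l + (d+1) = (l + d - 1) + 2 := by omega
      have e3 : (l + d - 1) + 1 = l + d := by omega
      rw [e, tDen, e3, ← e]
    have e4 : l + (d+1) - 1 = l + d := by omega
    have h1 := hpos (l + d)
    have h2 := hpos (l + d - 1)
    rw [e4, ht]
    push_cast
    field_simp

theorem tden_ratio_cf (b : ℤ) (hb : 3 ≤ b) (j n : ℕ) (hn : n = 2 ^ j) (h8 : 8 ≤ n)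
    (k : ℕ) (hk : 2 ≤ k) (hk' : k ≤ n / 2 - 1) :
    ∃ c : ℚ, 1 ≤ c ∧ c ≤ (b : ℚ) + 3 ∧
      (tDen b (n + k) : ℝ) / (tDen b (n + k - 1) : ℝ) =
        cfVal (((List.range (k - 1)).map fun i => ((cfA b (k - i) : ℤ) : ℝ)) ++
          [(b : ℝ) - 2, (b : ℝ)] ++
          ((List.range (n / 2 - 2)).map fun i => ((cfA b (i + 2) : ℤ) : ℝ)) ++
          [(c : ℝ)]) := by
  subst hn
  have hj : 3 ≤ j := by
    by_contra hc
    push_neg at hc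
    interval_cases j <;> norm_num at h8
  have h4 : 4 ≤ 2 ^ (j-1) := four_le_pow (by omega)
  have e2 : (2:ℕ) ^ j = 2 * 2 ^ (j-1) := by rw [← pow_succ']; congr 1; omega
  have hk2 : k ≤ 2 ^ (j-1) - 1 := by omega
  -- the tail value
  have hrec : tDen b (2^(j-1)+1)
      = cfA b (2^(j-1)+1) * tDen b (2^(j-1)) + tDen b (2^(j-1)-1) := by
    have e : 2^(j-1)+1 = (2^(j-1)-1) + 2 := by omega
    have e3 : (2^(j-1)-1)+1 = 2^(j-1) := by omega
    rw [e, tDen, e3, ← e]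
  have ha : cfA b (2^(j-1)+1) = b - 2 := cfA_pow_succ b (j-1) (by omega)
  have hm1 : 1 ≤ tDen b (2^(j-1)-1) := tDen_pos b hb _
  have hm0 : 1 ≤ tDen b (2^(j-1)) := tDen_pos b hb _
  have hmono : tDen b (2^(j-1)-1) ≤ tDen b (2^(j-1)) := by
    have := (tDen_pos_mono b hb (2^(j-1)-1)).2
    rwa [show (2^(j-1)-1)+1 = 2^(j-1) from by omega] at this
  have hub : tDen b (2^(j-1)+1) ≤ (b+3) * tDen b (2^(j-1)) := by
    rw [hrec, ha]; nlinarith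
  have hlb : tDen b (2^(j-1)) ≤ tDen b (2^(j-1)+1) := by
    rw [hrec, ha]; nlinarith
  have h0Q : (0:ℚ) < ((tDen b (2^(j-1)) : ℤ) : ℚ) := by exact_mod_cast (by omega : (0:ℤ) < tDen b (2^(j-1)))
  refine ⟨((tDen b (2^(j-1)+1) : ℤ) : ℚ) / ((tDen b (2^(j-1)) : ℤ) : ℚ), ?_, ?_, ?_⟩
  · rw [le_div_iff₀ h0Q, one_mul]
    exact_mod_cast hlb
  · rw [div_le_iff₀ h0Q]
    push_cast
    exact_mod_cast hub
  · have hchain := cf_chain b hb (2^(j-1)+1) (by omega) (2^(j-1) + k - 1)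
    have elhs : 2^(j-1)+1 + (2^(j-1)+k-1) = 2^j + k := by omega
    rw [elhs] at hchain
    simp only [Nat.add_sub_cancel] at hchain
    rw [hchain]
    congr 1
    have hsplit : 2^(j-1) + k - 1 = (k-1) + 2 + (2^(j-1) - 2) := by omega
    rw [hsplit, List.range_add, List.range_add, List.map_append, List.map_append,
      List.map_map, List.map_map,
      show (2^j/2 - 2 : ℕ) = 2^(j-1) - 2 from by omega]
    congr 1
    · congr 1
      · congr 1
        · -- first block
          apply List.map_congr_left
          intro i hi
          rw [List.mem_range] at hi
          rw [show 2^j + k - i = 2^j + (k-i) from by omega,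
            cfA_plus b j (k-i) hj (by omega) (by omega)]
        · -- middle block [b-2, b]
          rw [show List.range 2 = [0, 1] from rfl]
          simp only [List.map_cons, List.map_nil, Function.comp]
          rw [show (k - 1 + 0) = k - 1 from by omega]
          rw [show 2^j + k - (k-1) = 2^j + 1 from by omega,
            show 2^j + k - (k-1+1) = 2^j from by omega,
            cfA_pow_succ b j (by omega), cfA_pow b j (by omega)]
          push_cast
          rfl
      · -- third block
        apply List.map_congr_left
        intro i hi
        rw [List.mem_range] at hi
        simp only [Function.comp]
        rw [show 2^j + k - (k - 1 + 2 + i) = 2^j - (i+1) from by omega,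
          cfA_minus b j (i+1) hj (by omega) (by omega)]
    · -- tail
      push_cast
      rfl
end
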